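/- The Euclidean volume of the distorted cross polytope C_n^c = conv{e_1, …, e_n, −(c−1)e_1, …, −(c−1)e_n} ⊂ ℝ^n equals c^n / n!. -/

import Mathlib

/-!
Let `Δ = {y ≥ 0, ∑ y ≤ 1}` and let `D_S` multiply the coordinates in `S ⊆ [n]` by `-(c-1)`.
Then `C_n^c = ⋃_S D_S Δ`: each `D_S Δ` is the convex hull of `0 ∈ C_n^c` and vertices of `C_n^c`;
conversely `C_n^c` lies in the convex set `{a - (c-1) b | a, b ≥ 0, ∑ a + ∑ b ≤ 1}`, each point of
which lies in `D_S Δ` for `S` its set of negative coordinates. The simplices `D_S Δ` meet only in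
coordinate hyperplanes and `vol (D_S Δ) = (c-1)^|S| vol Δ`, so
`vol C_n^c = ∑_S (c-1)^|S| vol Δ = c^n vol Δ`. For `c = 2` the union is the unit `ℓ¹`-ball, of
volume `2^n / n!`, whence `vol Δ = 1 / n!`.
-/

/-- The distorted cross polytope
`C_n^c = conv{e_1,…,e_n, -(c-1)e_1, …, -(c-1)e_n} ⊂ ℝ^n`. -/
noncomputable def distortedCross (n c : ℕ) : Set (Fin n → ℝ) :=
  convexHull ℝ ((Set.range fun j : Fin n => Pi.single j (1 : ℝ)) ∪
    (Set.range fun j : Fin n => Pi.single j (-((c : ℝ) - 1))))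

open MeasureTheory Finset

theorem Convex.sum_smul_mem_of_zero_mem {𝕜 E ι : Type*} [Field 𝕜] [LinearOrder 𝕜]
    [IsStrictOrderedRing 𝕜] [AddCommGroup E] [Module 𝕜 E] {K : Set E} (hK : Convex 𝕜 K)
    (h0 : 0 ∈ K) {s : Finset ι} {w : ι → 𝕜} {z : ι → E} (hw : ∀ i ∈ s, 0 ≤ w i)
    (hw1 : ∑ i ∈ s, w i ≤ 1) (hz : ∀ i ∈ s, z i ∈ K) : ∑ i ∈ s, w i • z i ∈ K := by
  rcases (sum_nonneg hw).eq_or_lt with hzero | hpos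
  · have hw0 := (sum_eq_zero_iff_of_nonneg hw).1 hzero.symm
    rwa [sum_eq_zero fun i hi => by rw [hw0 i hi, zero_smul]]
  · have hmem : ∑ i ∈ s, (w i / ∑ j ∈ s, w j) • z i ∈ K :=
      hK.sum_mem (fun i hi => div_nonneg (hw i hi) hpos.le)
        (by rw [← sum_div, div_self hpos.ne']) hz
    convert (hK.starConvex h0).smul_mem hmem hpos.le hw1 using 1
    simp only [smul_sum, smul_smul, mul_div_cancel₀ _ hpos.ne']

section

variable {ι : Type*} [Fintype ι]

variable (ι) in
def cornerSimplex : Set (ι → ℝ) := {y | 0 ≤ y ∧ ∑ i, y i ≤ 1}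

theorem isCompact_cornerSimplex : IsCompact (cornerSimplex ι) := by
  refine (isCompact_Icc (a := (0 : ι → ℝ)) (b := 1)).of_isClosed_subset ?_ ?_
  · exact (isClosed_le continuous_const continuous_id).inter
      (isClosed_le (continuous_finsetSum _ fun i _ => continuous_apply i) continuous_const)
  · rintro y ⟨hy0, hy1⟩
    exact ⟨hy0, fun i => (single_le_sum (fun j _ => hy0 j) (mem_univ i)).trans hy1⟩

variable [DecidableEq ι]

def signedScaling (t : ℝ) (S : Finset ι) : (ι → ℝ) →ₗ[ℝ] ι → ℝ :=
  Matrix.toLin' (Matrix.diagonal (S.piecewise (fun _ => -t) 1))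

theorem signedScaling_apply (t : ℝ) (S : Finset ι) (y : ι → ℝ) (j : ι) :
    signedScaling t S y j = (if j ∈ S then -t else 1) * y j := by
  simp [signedScaling, Matrix.mulVec_diagonal, Finset.piecewise]

theorem abs_det_signedScaling {t : ℝ} (ht : 0 ≤ t) (S : Finset ι) :
    |LinearMap.det (signedScaling t S)| = t ^ #S := by
  rw [signedScaling, LinearMap.det_toLin', Matrix.det_diagonal, prod_piecewise]
  simp [abs_of_nonneg ht]

theorem aedisjoint_signedScaling_image {t : ℝ} (ht : 0 ≤ t) {S T : Finset ι} {j : ι}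
    (hS : j ∈ S) (hT : j ∉ T) :
    AEDisjoint volume (signedScaling t S '' cornerSimplex ι)
      (signedScaling t T '' cornerSimplex ι) := by
  refine measure_mono_null ?_ (Measure.pi_hyperplane _ j 0)
  rintro _ ⟨⟨y, ⟨hy0, -⟩, rfl⟩, ⟨z, ⟨hz0, -⟩, hzy⟩⟩
  have hzj := congr_fun hzy j
  show signedScaling t S y j = 0
  rw [signedScaling_apply, signedScaling_apply, if_pos hS, if_neg hT, one_mul] at *
  have hyj : 0 ≤ t * y j := mul_nonneg ht (hy0 j)
  have hzj0 : (0 : ℝ) ≤ z j := hz0 j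
  linarith [neg_mul t (y j)]

theorem volume_iUnion_signedScaling_image {t : ℝ} (ht : 0 ≤ t) :
    volume (⋃ S : Finset ι, signedScaling t S '' cornerSimplex ι)
      = ENNReal.ofReal ((t + 1) ^ Fintype.card ι) * volume (cornerSimplex ι) := by
  have hdisj : Pairwise (Function.onFun (AEDisjoint volume)
      fun S : Finset ι => signedScaling t S '' cornerSimplex ι) := by
    intro S T hST
    obtain ⟨j, hj⟩ := symmDiff_nonempty.2 hST
    rcases mem_symmDiff.1 hj with ⟨hS, hT⟩ | ⟨hT, hS⟩
    exacts [aedisjoint_signedScaling_image ht hS hT,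
      (aedisjoint_signedScaling_image ht hT hS).symm]
  rw [measure_iUnion₀ hdisj fun S => (isCompact_cornerSimplex.image
    (signedScaling t S).continuous_of_finiteDimensional).isClosed.measurableSet.nullMeasurableSet,
    tsum_fintype]
  simp_rw [Measure.addHaar_image_linearMap, abs_det_signedScaling ht]
  rw [← sum_mul, ← ENNReal.ofReal_sum_of_nonneg fun S _ => by positivity,
    ← Fintype.sum_pow_mul_eq_add_pow]
  simp

theorem iUnion_signedScaling_one_image :
    ⋃ S : Finset ι, signedScaling 1 S '' cornerSimplex ι = {x | ∑ i, |x i| ≤ 1} := by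
  ext x
  simp only [Set.mem_iUnion, Set.mem_image, Set.mem_ofPred_eq]
  constructor
  · rintro ⟨S, y, ⟨hy0, hy1⟩, rfl⟩
    convert hy1 using 2 with j
    rw [signedScaling_apply]
    split_ifs <;> simp [abs_of_nonneg (hy0 j)]
  · intro hx
    refine ⟨univ.filter (x · < 0), fun j => |x j|, ⟨fun j => abs_nonneg _, hx⟩,
      funext fun j => ?_⟩
    rw [signedScaling_apply]
    by_cases h : x j < 0
    · simp [h, abs_of_neg h]
    · simp [h, abs_of_nonneg (not_lt.1 h)]

theorem volume_cornerSimplex [Nonempty ι] :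
    volume (cornerSimplex ι) = ENNReal.ofReal (1 / ((Fintype.card ι).factorial : ℝ)) := by
  have hball := volume_sum_rpow_le (ι := ι) le_rfl 1
  simp only [Real.rpow_one, div_one] at hball
  rw [← iUnion_signedScaling_one_image, volume_iUnion_signedScaling_image zero_le_one] at hball
  norm_num [Real.Gamma_nat_eq_factorial] at hball
  rw [div_eq_mul_one_div, ENNReal.ofReal_mul (by positivity), ENNReal.ofReal_pow zero_le_two,
    ENNReal.ofReal_ofNat] at hball
  exact (ENNReal.mul_right_inj (by simp) (by simp)).1 hball

theorem exists_mem_Icc_sub_mul_eq_ite_mul {t a b : ℝ} (ht : 0 ≤ t) (ha : 0 ≤ a) (hb : 0 ≤ b) :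
    ∃ y ∈ Set.Icc 0 (a + b), a - t * b = (if a - t * b < 0 then -t else 1) * y := by
  split_ifs with h
  · have htpos : 0 < t := by
      by_contra! h'
      nlinarith
    refine ⟨b - a / t, ⟨?_, ?_⟩, by field_simp; ring⟩
    · rw [sub_nonneg, div_le_iff₀ htpos]
      linarith
    · linarith [div_nonneg ha ht]
  · exact ⟨a - t * b, ⟨not_lt.1 h, by nlinarith⟩, (one_mul _).symm⟩

theorem mem_iUnion_signedScaling_image {t : ℝ} (ht : 0 ≤ t) {a b : ι → ℝ} (ha : 0 ≤ a)
    (hb : 0 ≤ b) (hab : ∑ i, a i + ∑ i, b i ≤ 1) :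
    a - t • b ∈ ⋃ S : Finset ι, signedScaling t S '' cornerSimplex ι := by
  choose y hy hab_eq using fun i => exists_mem_Icc_sub_mul_eq_ite_mul ht (ha i) (hb i)
  refine Set.mem_iUnion.2
    ⟨univ.filter fun i => a i - t * b i < 0, y, ⟨fun i => (hy i).1, ?_⟩, ?_⟩
  · calc ∑ i, y i ≤ ∑ i, (a i + b i) := sum_le_sum fun i _ => (hy i).2
      _ ≤ 1 := by rwa [sum_add_distrib]
  · funext i
    rw [signedScaling_apply]
    simp only [mem_filter, mem_univ, true_and, Pi.sub_apply, Pi.smul_apply, smul_eq_mul]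
    exact (hab_eq i).symm

theorem signedScaling_single (t : ℝ) (S : Finset ι) (j : ι) :
    signedScaling t S (Pi.single j 1) = Pi.single j (if j ∈ S then -t else 1) := by
  funext i
  rw [signedScaling_apply]
  by_cases h : i = j
  · subst h; simp
  · simp [h]

end

section

variable {n c : ℕ}

theorem zero_mem_distortedCross (hn : 0 < n) (hc : 0 < c) :
    (0 : Fin n → ℝ) ∈ distortedCross n c := by
  set j : Fin n := ⟨0, hn⟩
  have hc' : (0 : ℝ) < c := Nat.cast_pos.2 hc
  have hcomb : ((c - 1) / c : ℝ) • Pi.single j (1 : ℝ) + (1 / c : ℝ) • Pi.single j (-((c : ℝ) - 1))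
      = (0 : Fin n → ℝ) := by
    rw [← Pi.single_smul, ← Pi.single_smul, ← Pi.single_add, smul_eq_mul, smul_eq_mul]
    field_simp
    simp
  rw [← hcomb]
  refine convex_convexHull ℝ _
    (subset_convexHull ℝ _ (Set.mem_union_left _ (Set.mem_range_self j)))
    (subset_convexHull ℝ _ (Set.mem_union_right _ (Set.mem_range_self j)))
    (div_nonneg (sub_nonneg.2 (Nat.one_le_cast.2 hc)) hc'.le) (by positivity) (by field_simp; ring)

theorem signedScaling_image_subset_distortedCross (hn : 0 < n) (hc : 0 < c) (S : Finset (Fin n)) :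
    signedScaling ((c : ℝ) - 1) S '' cornerSimplex (Fin n) ⊆ distortedCross n c := by
  rintro _ ⟨y, ⟨hy0, hy1⟩, rfl⟩
  have hy : y = ∑ j, y j • Pi.single j (1 : ℝ) := by simp [← Pi.single_smul, univ_sum_single]
  rw [hy, map_sum]
  simp_rw [map_smul, signedScaling_single]
  refine (convex_convexHull ℝ _).sum_smul_mem_of_zero_mem (zero_mem_distortedCross hn hc)
    (fun j _ => hy0 j) hy1 fun j _ => subset_convexHull ℝ _ ?_
  split_ifs
  exacts [Or.inr ⟨j, rfl⟩, Or.inl ⟨j, rfl⟩]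

theorem distortedCross_subset_iUnion (hc : 0 < c) :
    distortedCross n c ⊆
      ⋃ S : Finset (Fin n), signedScaling ((c : ℝ) - 1) S '' cornerSimplex (Fin n) := by
  set T : Set (Fin n → ℝ) :=
    {x | ∃ a b : Fin n → ℝ, 0 ≤ a ∧ 0 ≤ b ∧ ∑ j, a j + ∑ j, b j ≤ 1 ∧ x = a - ((c : ℝ) - 1) • b}
  suffices distortedCross n c ⊆ T by
    intro x hx
    obtain ⟨a, b, ha, hb, hab, rfl⟩ := this hx
    exact mem_iUnion_signedScaling_image (sub_nonneg.2 (Nat.one_le_cast.2 hc)) ha hb hab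
  refine convexHull_min ?_ ?_
  · rintro _ (⟨j, rfl⟩ | ⟨j, rfl⟩)
    · exact ⟨Pi.single j 1, 0, Pi.single_nonneg.2 zero_le_one, le_rfl, by simp, by simp⟩
    · exact ⟨0, Pi.single j 1, le_rfl, Pi.single_nonneg.2 zero_le_one, by simp,
        by rw [zero_sub, ← Pi.single_smul, ← Pi.single_neg, smul_eq_mul, mul_one]⟩
  · rintro _ ⟨a, b, ha, hb, hab, rfl⟩ _ ⟨a', b', ha', hb', hab', rfl⟩ μ ν hμ hν hμν
    refine ⟨μ • a + ν • a', μ • b + ν • b', add_nonneg (smul_nonneg hμ ha) (smul_nonneg hν ha'),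
      add_nonneg (smul_nonneg hμ hb) (smul_nonneg hν hb'), ?_, by module⟩
    simp only [Pi.add_apply, Pi.smul_apply, smul_eq_mul, sum_add_distrib, ← mul_sum]
    nlinarith

theorem distortedCross_eq_iUnion (hn : 0 < n) (hc : 0 < c) :
    distortedCross n c =
      ⋃ S : Finset (Fin n), signedScaling ((c : ℝ) - 1) S '' cornerSimplex (Fin n) :=
  (distortedCross_subset_iUnion hc).antisymm
    (Set.iUnion_subset (signedScaling_image_subset_distortedCross hn hc))

end

/-- The Euclidean volume of the distorted cross polytope `C_n^c` equals `c^n / n!`. -/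
theorem distortedCross_volume (n c : ℕ) (hn : 0 < n) (hc : 0 < c) :
    MeasureTheory.volume (distortedCross n c)
      = ENNReal.ofReal ((c : ℝ) ^ n / (Nat.factorial n : ℝ)) := by
  have : Nonempty (Fin n) := ⟨⟨0, hn⟩⟩
  rw [distortedCross_eq_iUnion hn hc,
    volume_iUnion_signedScaling_image (sub_nonneg.2 (Nat.one_le_cast.2 hc)),
    volume_cornerSimplex, sub_add_cancel, ← ENNReal.ofReal_mul (by positivity), Fintype.card_fin,
    mul_one_div]
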